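/- arXiv:2405.09327 — 2 statements merged into one kernel-verified Lean document; each statement's English description precedes it below -/
import Mathlib

section
/- Let N be a binary rooted phylogenetic network with no parallel edges and no degree-2 nodes other than the root. Suppose v1 is a hybrid node whose two parents u1, u2 are not adjacent in N, and v1 has a descendant hybrid node v2 such that at least one parent of v2 is neither a descendant of u1 nor a descendant of u2. Then v1 and v2 lie on a common cycle of the underlying undirected graph of N; consequently v1 and v2 belong to the same blob of N, and the level of N is at least 2. -/
open Finset

section Defs

variable {V : Type} [Fintype V] [DecidableEq V]

/-- In-degree of `v` in the digraph with edge relation `E`. -/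
def inDeg (E : V → V → Prop) [DecidableRel E] (v : V) : ℕ :=
  (Finset.univ.filter (fun u => E u v)).card

/-- Out-degree of `v` in the digraph with edge relation `E`. -/
def outDeg (E : V → V → Prop) [DecidableRel E] (v : V) : ℕ :=
  (Finset.univ.filter (fun u => E v u)).card

/-- A root is a node of in-degree 0. -/
def IsRoot (E : V → V → Prop) [DecidableRel E] (v : V) : Prop := inDeg E v = 0

/-- A hybrid node has in-degree at least 2. -/
def IsHybrid (E : V → V → Prop) [DecidableRel E] (v : V) : Prop := 2 ≤ inDeg E v

/-- The digraph has no directed cycle. -/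
def DigraphAcyclic (E : V → V → Prop) : Prop := ∀ v : V, ¬ Relation.TransGen E v v

/-- `w` is a descendant of `u`: there is a directed path from `u` to `w`. -/
def Desc (E : V → V → Prop) (u w : V) : Prop := Relation.ReflTransGen E u w

/-- A binary rooted phylogenetic network (edge relation encoding: no parallel edges):
a DAG with a unique root of out-degree 2 from which every node is reachable, where every
non-root node is a leaf (in 1, out 0), an internal tree node (in 1, out 2) or a hybrid
node (in 2, out 1).  In particular no node other than the root has total degree 2. -/
def IsBinaryNetwork (E : V → V → Prop) [DecidableRel E] : Prop :=
  DigraphAcyclic E ∧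
  ∃ ρ : V, IsRoot E ρ ∧ outDeg E ρ = 2 ∧ (∀ v : V, Desc E ρ v) ∧
    ∀ v : V, v ≠ ρ →
      (inDeg E v = 1 ∧ outDeg E v = 0) ∨
      (inDeg E v = 1 ∧ outDeg E v = 2) ∨
      (inDeg E v = 2 ∧ outDeg E v = 1)

/-- Number of hybrid nodes (the reticulation number of a binary network). -/
def hybridCount (E : V → V → Prop) [DecidableRel E] : ℕ :=
  (Finset.univ.filter (fun v => 2 ≤ inDeg E v)).card

/-- The underlying undirected graph of the digraph `E`. -/
def undir (E : V → V → Prop) : SimpleGraph V := SimpleGraph.fromRel E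

/-- The moralized graph: add an edge between any two distinct nodes sharing a common
child, then forget directions. -/
def moralized (E : V → V → Prop) : SimpleGraph V :=
  SimpleGraph.fromRel (fun a b => E a b ∨ ∃ c, E a c ∧ E b c)

/-- Two edges of `G` are related if they are equal or lie on a common cycle. -/
def EdgeCycleRel (G : SimpleGraph V) (e f : Sym2 V) : Prop :=
  e ∈ G.edgeSet ∧ f ∈ G.edgeSet ∧
    (e = f ∨ ∃ (v : V) (w : G.Walk v v), w.IsCycle ∧ e ∈ w.edges ∧ f ∈ w.edges)

/-- A blob (biconnected component) of `G`, as a set of edges: an equivalence class,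
containing at least one edge, of the equivalence closure of `EdgeCycleRel`. -/
def IsBlob (G : SimpleGraph V) (B : Set (Sym2 V)) : Prop :=
  ∃ e ∈ G.edgeSet, B = {f | Relation.EqvGen (EdgeCycleRel G) e f}

/-- The nodes contained in a blob `B`. -/
def blobVerts (B : Set (Sym2 V)) : Set V := {v | ∃ e ∈ B, v ∈ e}

/-- The level of the network is at most `k`: every blob contains at most `k` hybrid nodes. -/
def levelLE (E : V → V → Prop) [DecidableRel E] (k : ℕ) : Prop :=
  ∀ B : Set (Sym2 V), IsBlob (undir E) B →
    {v : V | IsHybrid E v ∧ v ∈ blobVerts B}.ncard ≤ k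

/-- A tree decomposition of the undirected graph `G`, with bags indexed by `ι`. -/
structure TreeDecomp (G : SimpleGraph V) (ι : Type) where
  tree : SimpleGraph ι
  connected : tree.Connected
  acyclic : tree.IsAcyclic
  bag : ι → Finset V
  bag_vert : ∀ v : V, ∃ i, v ∈ bag i
  bag_edge : ∀ u v : V, G.Adj u v → ∃ i, u ∈ bag i ∧ v ∈ bag i
  bag_subtree : ∀ v : V, (tree.induce {i : ι | v ∈ bag i}).Connected

/-- The treewidth of `G` is at most `k`: there is a tree decomposition all of whose bags
have at most `k+1` vertices. -/
def treewidthLE (G : SimpleGraph V) (k : ℕ) : Prop :=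
  ∃ (ι : Type) (_ : Fintype ι) (D : TreeDecomp G ι), ∀ i : ι, (D.bag i).card ≤ k + 1

end Defs

section Aux

variable {V : Type} [Fintype V] [DecidableEq V]

lemma adjE {E : V → V → Prop} (ha : DigraphAcyclic E) {a b : V} (h : E a b) :
    (undir E).Adj a b := by
  have hne : a ≠ b := by rintro rfl; exact ha a (Relation.TransGen.single h)
  exact (SimpleGraph.fromRel_adj E a b).mpr ⟨hne, Or.inl h⟩

lemma desc_walk {E : V → V → Prop} (ha : DigraphAcyclic E) {a b : V} (h : Desc E a b) :
    ∃ w : (undir E).Walk a b, ∀ x ∈ w.support, Desc E a x ∧ Desc E x b := by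
  induction h with
  | refl =>
    refine ⟨SimpleGraph.Walk.nil, ?_⟩
    intro x hx
    simp only [SimpleGraph.Walk.support_nil, List.mem_singleton] at hx
    subst hx
    exact ⟨Relation.ReflTransGen.refl, Relation.ReflTransGen.refl⟩
  | @tail c d hac hcd ih =>
    obtain ⟨w, hw⟩ := ih
    refine ⟨w.concat (adjE ha hcd), ?_⟩
    intro x hx
    rw [SimpleGraph.Walk.support_concat, List.mem_append] at hx
    rcases hx with hx | hx
    · obtain ⟨h1, h2⟩ := hw x hx
      exact ⟨h1, h2.tail hcd⟩
    · rw [List.mem_singleton] at hx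
      subst hx
      exact ⟨hac.tail hcd, Relation.ReflTransGen.refl⟩

lemma exists_start_edge {G : SimpleGraph V} {a b : V} (w : G.Walk a b) (h : a ≠ b) :
    ∃ e ∈ w.edges, a ∈ e := by
  cases w with
  | nil => exact absurd rfl h
  | cons h' p =>
    exact ⟨_, by rw [SimpleGraph.Walk.edges_cons]; exact List.mem_cons_self,
      Sym2.mem_mk_left _ _⟩

lemma exists_end_edge {G : SimpleGraph V} {a b : V} (w : G.Walk a b) (h : a ≠ b) :
    ∃ e ∈ w.edges, b ∈ e := by
  obtain ⟨e, he, hbe⟩ := exists_start_edge w.reverse h.symm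
  rw [SimpleGraph.Walk.edges_reverse, List.mem_reverse] at he
  exact ⟨e, he, hbe⟩

lemma append_isCycle {G : SimpleGraph V} {u v : V} {p : G.Walk u v} {q : G.Walk v u}
    (hp : p.IsPath) (hq : q.IsPath) (huv : u ≠ v)
    (hint : ∀ x, x ∈ p.support → x ∈ q.support → x = u ∨ x = v)
    (hq1 : s(u, v) ∉ q.edges) : (p.append q).IsCycle := by
  have hpn : p.support.Nodup := hp.support_nodup
  have hqn : q.support.Nodup := hq.support_nodup
  rw [SimpleGraph.Walk.support_eq_cons] at hpn
  rw [SimpleGraph.Walk.support_eq_cons] at hqn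
  rw [List.nodup_cons] at hpn hqn
  have hedis : ∀ e, e ∈ p.edges → e ∈ q.edges → False := by
    intro e hep heq
    induction e using Sym2.ind with
    | _ a b =>
      have ha1 := SimpleGraph.Walk.fst_mem_support_of_mem_edges p hep
      have hb1 := SimpleGraph.Walk.snd_mem_support_of_mem_edges p hep
      have ha2 := SimpleGraph.Walk.fst_mem_support_of_mem_edges q heq
      have hb2 := SimpleGraph.Walk.snd_mem_support_of_mem_edges q heq
      have hadj : G.Adj a b := SimpleGraph.Walk.edges_subset_edgeSet p hep
      rcases hint a ha1 ha2 with rfl | rfl <;> rcases hint b hb1 hb2 with rfl | rfl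
      · exact hadj.ne rfl
      · exact hq1 heq
      · exact hq1 (by rwa [Sym2.eq_swap] at heq)
      · exact hadj.ne rfl
  have hnenil : p.append q ≠ SimpleGraph.Walk.nil := by
    intro hcon
    have hlen : (p.append q).length = 0 := by rw [hcon]; rfl
    rw [SimpleGraph.Walk.length_append] at hlen
    exact huv (p.eq_of_length_eq_zero (by omega))
  refine ⟨⟨⟨?_⟩, hnenil⟩, ?_⟩
  · rw [SimpleGraph.Walk.edges_append]
    exact List.Nodup.append hp.edges_nodup hq.edges_nodup
      (fun e hep heq => hedis e hep heq)
  · have htail : (p.append q).support.tail = p.support.tail ++ q.support.tail := by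
      rw [SimpleGraph.Walk.support_append, SimpleGraph.Walk.support_eq_cons p]
      rfl
    rw [htail]
    refine List.Nodup.append hpn.2 hqn.2 ?_
    intro x hx1 hx2
    have hx1' : x ∈ p.support := List.mem_of_mem_tail hx1
    have hx2' : x ∈ q.support := List.mem_of_mem_tail hx2
    rcases hint x hx1' hx2' with rfl | rfl
    · exact hpn.1 hx1
    · exact hqn.1 hx2

end Aux


/-- Let `N` be a binary rooted phylogenetic network (no parallel edges,
no degree-2 nodes other than the root).  If `v₁` is a hybrid node whose two parents
`u₁, u₂` are not adjacent in `N`, and `v₁` has a descendant hybrid node `v₂` one of whose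
parents is neither a descendant of `u₁` nor of `u₂`, then `v₁` and `v₂` lie on a common
cycle of the underlying undirected graph; consequently they belong to a common blob, and
the level of `N` is at least 2. -/
theorem hybrid_ladder_common_cycle_same_blob
    (V : Type) [Fintype V] [DecidableEq V]
    (E : V → V → Prop) [DecidableRel E]
    (hbin : IsBinaryNetwork E)
    (v1 u1 u2 v2 u3 : V)
    (hhyb1 : IsHybrid E v1) (hpar1 : E u1 v1) (hpar2 : E u2 v1) (hu12 : u1 ≠ u2)
    (hnadj : ¬ E u1 u2 ∧ ¬ E u2 u1)
    (hhyb2 : IsHybrid E v2) (hdesc : Desc E v1 v2)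
    (hpar3 : E u3 v2)
    (hnd1 : ¬ Desc E u1 u3) (hnd2 : ¬ Desc E u2 u3) :
    (∃ (x : V) (w : (undir E).Walk x x),
        w.IsCycle ∧ v1 ∈ w.support ∧ v2 ∈ w.support) ∧
    (∃ B : Set (Sym2 V),
        IsBlob (undir E) B ∧ v1 ∈ blobVerts B ∧ v2 ∈ blobVerts B) ∧
    ¬ levelLE E 1 := by
  obtain ⟨ha, ρ, hroot, hout, hreach, hdeg⟩ := hbin
  have hnoback : ∀ {a b : V}, Desc E a b → E b a → False :=
    fun hd he => ha _ (Relation.TransGen.tail' hd he)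
  have hdu1v1 : Desc E u1 v1 := Relation.ReflTransGen.single hpar1
  -- v1 ≠ v2
  have hv1v2 : v1 ≠ v2 := by
    rintro rfl
    have h31 : u3 ≠ u1 := by rintro rfl; exact hnd1 Relation.ReflTransGen.refl
    have h32 : u3 ≠ u2 := by rintro rfl; exact hnd2 Relation.ReflTransGen.refl
    have hsub : ({u1, u2, u3} : Finset V) ⊆ Finset.univ.filter (fun u => E u v1) := by
      intro x hx
      simp only [Finset.mem_insert, Finset.mem_singleton] at hx
      rcases hx with rfl | rfl | rfl <;>
        simp [Finset.mem_filter, hpar1, hpar2, hpar3]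
    have hcard : ({u1, u2, u3} : Finset V).card = 3 := by
      rw [Finset.card_insert_of_notMem (by simp [hu12, h31.symm]),
        Finset.card_insert_of_notMem (by simp [h32.symm]), Finset.card_singleton]
    have h3 : 3 ≤ inDeg E v1 := by
      have := Finset.card_le_card hsub
      rwa [hcard] at this
    have hne : v1 ≠ ρ := by
      rintro rfl
      rw [IsRoot] at hroot
      rw [IsHybrid, hroot] at hhyb1
      omega
    rcases hdeg v1 hne with ⟨h, _⟩ | ⟨h, _⟩ | ⟨h, _⟩ <;> omega
  -- walks
  obtain ⟨W1, hW1⟩ := desc_walk ha hdesc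
  obtain ⟨W2, hW2⟩ := desc_walk ha (hreach u3)
  obtain ⟨W3, hW3⟩ := desc_walk ha (hreach u1)
  set Wq : (undir E).Walk ρ v2 := W2.concat (adjE ha hpar3) with hWqdef
  set W3' : (undir E).Walk ρ v1 := W3.concat (adjE ha hpar1) with hW3'def
  set P2 : (undir E).Walk v2 v1 := Wq.reverse.append W3' with hP2def
  have hWqs : ∀ x ∈ Wq.support, Desc E x u3 ∨ x = v2 := by
    intro x hx
    rw [hWqdef, SimpleGraph.Walk.support_concat,
      List.mem_append, List.mem_singleton] at hx
    rcases hx with hx | hx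
    · exact Or.inl (hW2 x hx).2
    · exact Or.inr hx
  have hW3's : ∀ x ∈ W3'.support, Desc E x u1 ∨ x = v1 := by
    intro x hx
    rw [hW3'def, SimpleGraph.Walk.support_concat,
      List.mem_append, List.mem_singleton] at hx
    rcases hx with hx | hx
    · exact Or.inl (hW3 x hx).2
    · exact Or.inr hx
  have hP2s : ∀ x ∈ P2.support, x = v1 ∨ x = v2 ∨ Desc E x u3 ∨ Desc E x u1 := by
    intro x hx
    rw [hP2def, SimpleGraph.Walk.mem_support_append_iff] at hx
    rcases hx with hx | hx
    · rw [SimpleGraph.Walk.support_reverse, List.mem_reverse] at hx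
      rcases hWqs x hx with h | h
      · exact Or.inr (Or.inr (Or.inl h))
      · exact Or.inr (Or.inl h)
    · rcases hW3's x hx with h | h
      · exact Or.inr (Or.inr (Or.inr h))
      · exact Or.inl h
  have hsep : ∀ x, Desc E v1 x → Desc E x u3 ∨ Desc E x u1 → False := by
    rintro x hvx (h | h)
    · exact hnd1 ((hdu1v1.trans hvx).trans h)
    · exact hnoback (hvx.trans h) hpar1
  have hedge : s(v1, v2) ∉ P2.edges := by
    intro hmem
    rw [hP2def, SimpleGraph.Walk.edges_append, List.mem_append] at hmem
    rcases hmem with hmem | hmem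
    · rw [SimpleGraph.Walk.edges_reverse, List.mem_reverse] at hmem
      have hv1 : v1 ∈ Wq.support := SimpleGraph.Walk.fst_mem_support_of_mem_edges _ hmem
      rcases hWqs v1 hv1 with h | h
      · exact hnd1 (hdu1v1.trans h)
      · exact hv1v2 h
    · have hv2 : v2 ∈ W3'.support := SimpleGraph.Walk.snd_mem_support_of_mem_edges _ hmem
      rcases hW3's v2 hv2 with h | h
      · exact hnoback (hdesc.trans h) hpar1
      · exact hv1v2 h.symm
  set p : (undir E).Walk v1 v2 := W1.bypass with hpdef
  set q : (undir E).Walk v2 v1 := P2.bypass with hqdef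
  have hC : (p.append q).IsCycle := by
    refine append_isCycle W1.bypass_isPath P2.bypass_isPath hv1v2 ?_ ?_
    · intro x hx1 hx2
      have h1 := hW1 x (W1.support_bypass_subset hx1)
      have h2 := hP2s x (P2.support_bypass_subset hx2)
      rcases h2 with h | h | h | h
      · exact Or.inl h
      · exact Or.inr h
      · exact (hsep x h1.1 (Or.inl h)).elim
      · exact (hsep x h1.1 (Or.inr h)).elim
    · intro hmem
      exact hedge (P2.edges_bypass_subset hmem)
  have hv1C : v1 ∈ (p.append q).support := SimpleGraph.Walk.start_mem_support _
  have hv2C : v2 ∈ (p.append q).support := by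
    rw [SimpleGraph.Walk.mem_support_append_iff]
    exact Or.inl (SimpleGraph.Walk.end_mem_support p)
  obtain ⟨e1, he1, hv1e1⟩ := exists_start_edge p hv1v2
  obtain ⟨e2, he2, hv2e2⟩ := exists_end_edge p hv1v2
  have he1C : e1 ∈ (p.append q).edges := by
    rw [SimpleGraph.Walk.edges_append]; exact List.mem_append_left _ he1
  have he2C : e2 ∈ (p.append q).edges := by
    rw [SimpleGraph.Walk.edges_append]; exact List.mem_append_left _ he2
  have he1E : e1 ∈ (undir E).edgeSet := SimpleGraph.Walk.edges_subset_edgeSet _ he1C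
  have he2E : e2 ∈ (undir E).edgeSet := SimpleGraph.Walk.edges_subset_edgeSet _ he2C
  set B : Set (Sym2 V) := {f | Relation.EqvGen (EdgeCycleRel (undir E)) e1 f} with hBdef
  have hBblob : IsBlob (undir E) B := ⟨e1, he1E, rfl⟩
  have hv1B : v1 ∈ blobVerts B := ⟨e1, Relation.EqvGen.refl e1, hv1e1⟩
  have hv2B : v2 ∈ blobVerts B :=
    ⟨e2, Relation.EqvGen.rel _ _ ⟨he1E, he2E, Or.inr ⟨v1, p.append q, hC, he1C, he2C⟩⟩, hv2e2⟩
  refine ⟨⟨v1, p.append q, hC, hv1C, hv2C⟩, ⟨B, hBblob, hv1B, hv2B⟩, ?_⟩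
  intro hlev
  have hle := hlev B hBblob
  have hsub : ({v1, v2} : Set V) ⊆ {v : V | IsHybrid E v ∧ v ∈ blobVerts B} := by
    rintro x (rfl | rfl)
    · exact ⟨hhyb1, hv1B⟩
    · exact ⟨hhyb2, hv2B⟩
  have h2 : 2 ≤ {v : V | IsHybrid E v ∧ v ∈ blobVerts B}.ncard := by
    calc 2 = ({v1, v2} : Set V).ncard := (Set.ncard_pair hv1v2).symm
      _ ≤ _ := Set.ncard_le_ncard hsub (Set.toFinite _)
  omega
end

section
/- Let N be a rooted phylogenetic network (a finite connected directed acyclic graph with a single root and no parallel edges). If two distinct nodes u1 and u2 are both parents of a common node v, then u1, u2 and v all lie in the same biconnected component of the underlying undirected graph of N. Consequently, every edge added during moralization of N joins two nodes that already belong to a common blob of N. -/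
open Finset

/-- Let `N` be a rooted phylogenetic network (a finite connected DAG
with a single root and no parallel edges).  If two distinct nodes `u₁, u₂` are parents of
a common node `v`, then `u₁`, `u₂` and `v` lie in a common blob (biconnected component of
the underlying undirected graph).  Consequently, every edge added during moralization
joins two nodes that already belong to a common blob. -/
theorem moral_edge_within_blob
    (V : Type) [Fintype V] [DecidableEq V]
    (E : V → V → Prop) [DecidableRel E]
    (hdag : DigraphAcyclic E)
    (hroot : ∃! ρ : V, IsRoot E ρ)
    (hconn : (undir E).Connected) :
    (∀ u1 u2 v : V, u1 ≠ u2 → E u1 v → E u2 v →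
        ∃ B : Set (Sym2 V), IsBlob (undir E) B ∧
          u1 ∈ blobVerts B ∧ u2 ∈ blobVerts B ∧ v ∈ blobVerts B) ∧
    (∀ a b : V, a ≠ b → (∃ c : V, E a c ∧ E b c) →
        ∃ B : Set (Sym2 V), IsBlob (undir E) B ∧
          a ∈ blobVerts B ∧ b ∈ blobVerts B) := by
  classical
  set G := undir E with hG
  -- basic facts
  have hne : ∀ {a b : V}, E a b → a ≠ b := by
    intro a b hab heq
    subst heq
    exact hdag a (Relation.TransGen.single hab)
  have hadj : ∀ {a b : V}, E a b → G.Adj a b := by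
    intro a b hab
    exact ⟨hne hab, Or.inl hab⟩
  -- every node is reachable from some root
  have hwf : WellFounded (Relation.TransGen E) := by
    have ht : IsTrans V (Relation.TransGen E) := ⟨fun _ _ _ => Relation.TransGen.trans⟩
    have hi : IsIrrefl V (Relation.TransGen E) := ⟨hdag⟩
    exact Finite.wellFounded_of_trans_of_irrefl _
  obtain ⟨ρ, hρroot, hρuniq⟩ := hroot
  have hreach : ∀ w : V, Relation.ReflTransGen E ρ w := by
    intro w
    induction w using hwf.induction with
    | _ w ih =>
      by_cases h : ∃ u, E u w
      · obtain ⟨u, hu⟩ := h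
        exact (ih u (Relation.TransGen.single hu)).tail hu
      · have : IsRoot E w := by
          unfold IsRoot inDeg
          rw [Finset.card_eq_zero, Finset.filter_eq_empty_iff]
          intro u _
          exact fun hu => h ⟨u, hu⟩
        rw [hρuniq w this]
  -- walks from ρ staying among ancestors of the target
  have hwalk : ∀ {a b : V}, Relation.ReflTransGen E a b →
      ∃ w : G.Walk a b, ∀ x ∈ w.support, Relation.ReflTransGen E x b := by
    intro a b h
    induction h using Relation.ReflTransGen.head_induction_on with
    | refl =>
      refine ⟨SimpleGraph.Walk.nil, ?_⟩
      intro x hx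
      rw [SimpleGraph.Walk.support_nil, List.mem_singleton] at hx
      subst hx
      exact Relation.ReflTransGen.refl
    | head hac _ ih =>
      obtain ⟨w, hw⟩ := ih
      refine ⟨SimpleGraph.Walk.cons (hadj hac) w, ?_⟩
      intro x hx
      rw [SimpleGraph.Walk.support_cons, List.mem_cons] at hx
      rcases hx with rfl | hx
      · exact (hw _ w.start_mem_support).head hac
      · exact hw x hx
  -- main part
  have main : ∀ u1 u2 v : V, u1 ≠ u2 → E u1 v → E u2 v →
      ∃ B : Set (Sym2 V), IsBlob (undir E) B ∧
        u1 ∈ blobVerts B ∧ u2 ∈ blobVerts B ∧ v ∈ blobVerts B := by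
    intro u1 u2 v hne12 h1 h2
    -- walks from ρ to u1 and u2 avoiding v
    have havoid : ∀ {u : V}, E u v → ∃ w : G.Walk ρ u, v ∉ w.support := by
      intro u hu
      obtain ⟨w, hw⟩ := hwalk (hreach u)
      refine ⟨w, fun hv => ?_⟩
      exact hdag v (Relation.TransGen.tail' (hw v hv) hu)
    obtain ⟨w1, hw1⟩ := havoid h1
    obtain ⟨w2, hw2⟩ := havoid h2
    -- a path from u1 to u2 avoiding v
    set w : G.Walk u1 u2 := w1.reverse.append w2 with hwdef
    have hvw : v ∉ w.support := by
      rw [hwdef, SimpleGraph.Walk.mem_support_append_iff, SimpleGraph.Walk.support_reverse,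
        List.mem_reverse]
      rintro (h | h) <;> [exact hw1 h; exact hw2 h]
    set p : G.Walk u1 u2 := w.bypass with hpdef
    have hp : p.IsPath := w.bypass_isPath
    have hvp : v ∉ p.support := fun h => hvw (w.support_bypass_subset h)
    -- build a cycle through v, u1, ..., u2, v
    have hu1v : u1 ≠ v := hne h1
    have hu2v : u2 ≠ v := hne h2
    have hcadj1 : G.Adj v u1 := (hadj h1).symm
    have hcadj2 : G.Adj u2 v := hadj h2
    set q : G.Walk u1 v := p.concat hcadj2 with hqdef
    have hq : q.IsPath := by
      rw [SimpleGraph.Walk.isPath_def, hqdef, SimpleGraph.Walk.support_concat]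
      rw [List.nodup_append]
      refine ⟨hp.support_nodup, List.nodup_singleton _, ?_⟩
      intro x hx y hx' hxy
      rw [List.mem_singleton] at hx'
      subst hx'
      subst hxy
      exact hvp hx
    have hqe : ¬ s(v, u1) ∈ q.edges := by
      rw [hqdef, SimpleGraph.Walk.edges_concat, List.concat_eq_append, List.mem_append,
        List.mem_singleton]
      rintro (h | h)
      · exact hvp (p.fst_mem_support_of_mem_edges h)
      · rw [Sym2.eq_iff] at h
        rcases h with ⟨h, h'⟩ | ⟨h, h'⟩
        · exact hu2v h.symm
        · exact hne12 h'
    set c : G.Walk v v := SimpleGraph.Walk.cons hcadj1 q with hcdef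
    have hcyc : c.IsCycle := by
      rw [hcdef, SimpleGraph.Walk.cons_isCycle_iff]
      exact ⟨hq, hqe⟩
    have he1mem : s(v, u1) ∈ c.edges := by
      rw [hcdef, SimpleGraph.Walk.edges_cons]
      exact List.mem_cons_self
    have he2mem : s(v, u2) ∈ c.edges := by
      rw [hcdef, SimpleGraph.Walk.edges_cons, hqdef, SimpleGraph.Walk.edges_concat]
      rw [List.concat_eq_append]
      simp [Sym2.eq_swap]
    have he1 : s(v, u1) ∈ G.edgeSet := hcadj1
    have he2 : s(v, u2) ∈ G.edgeSet := hcadj2.symm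
    refine ⟨{f | Relation.EqvGen (EdgeCycleRel G) s(v, u1) f}, ⟨s(v, u1), he1, rfl⟩, ?_, ?_, ?_⟩
    · exact ⟨s(v, u1), Relation.EqvGen.refl _, by simp⟩
    · refine ⟨s(v, u2), Relation.EqvGen.rel _ _ ?_, by simp⟩
      exact ⟨he1, he2, Or.inr ⟨v, c, hcyc, he1mem, he2mem⟩⟩
    · exact ⟨s(v, u1), Relation.EqvGen.refl _, by simp⟩
  refine ⟨main, ?_⟩
  intro a b hab ⟨c, hac, hbc⟩
  obtain ⟨B, hB, haB, hbB, _⟩ := main a b c hab hac hbc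
  exact ⟨B, hB, haB, hbB⟩
end
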